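/- For a smooth matrix field μ on an open set in ℝ³, div(Ξμ) = 2·vec(skw(curl μ)), where Ξμ = μᵀ - tr(μ)·I, curl is applied row-wise, div is applied row-wise, skw is the skew part, and vec is the inverse cross-product map. -/

import Mathlib

noncomputable section

open Matrix

/-- Standard basis vector of ℝ³. -/
def e3 (j : Fin 3) : Fin 3 → ℝ := Pi.single j 1

/-- Partial derivative `∂ⱼ f` at `x`. -/
def pd (j : Fin 3) (f : (Fin 3 → ℝ) → ℝ) (x : Fin 3 → ℝ) : ℝ :=
  fderiv ℝ f x (e3 j)

/-- `Ξ A = Aᵀ - tr(A) • 1`. -/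
def Xi (A : Matrix (Fin 3) (Fin 3) ℝ) : Matrix (Fin 3) (Fin 3) ℝ :=
  Aᵀ - (Matrix.trace A) • (1 : Matrix (Fin 3) (Fin 3) ℝ)

/-- The skew-symmetric part `skw A = (1/2)(A - Aᵀ)`. -/
def skw (A : Matrix (Fin 3) (Fin 3) ℝ) : Matrix (Fin 3) (Fin 3) ℝ :=
  (1/2 : ℝ) • (A - Aᵀ)

/-- `vec K = (K 2 1, K 0 2, K 1 0)`: the axial vector of a skew matrix. -/
def vecOp (K : Matrix (Fin 3) (Fin 3) ℝ) : Fin 3 → ℝ :=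
  ![K 2 1, K 0 2, K 1 0]

/-- Row-wise divergence of a matrix field: `(div M)ᵢ = Σⱼ ∂ⱼ Mᵢⱼ`. -/
def divMat (M : (Fin 3 → ℝ) → Matrix (Fin 3) (Fin 3) ℝ) (x : Fin 3 → ℝ) : Fin 3 → ℝ :=
  fun i => ∑ j, pd j (fun y => M y i j) x

/-- Curl of a vector field on ℝ³. -/
def curlVec (u : (Fin 3 → ℝ) → Fin 3 → ℝ) (x : Fin 3 → ℝ) : Fin 3 → ℝ :=
  ![pd 1 (fun y => u y 2) x - pd 2 (fun y => u y 1) x,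
    pd 2 (fun y => u y 0) x - pd 0 (fun y => u y 2) x,
    pd 0 (fun y => u y 1) x - pd 1 (fun y => u y 0) x]

/-- Row-wise curl of a matrix field: the `i`-th row is the curl of the `i`-th row. -/
def curlMat (M : (Fin 3 → ℝ) → Matrix (Fin 3) (Fin 3) ℝ) (x : Fin 3 → ℝ) :
    Matrix (Fin 3) (Fin 3) ℝ :=
  Matrix.of fun i j => curlVec (fun y => M y i) x j

/-- For a continuously differentiable matrix field `μ` on an open set `Ω ⊆ ℝ³`,
`div (Ξ μ) = 2 • vec (skw (curl μ))` pointwise on `Ω`. -/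
theorem stmt_5 (Ω : Set (Fin 3 → ℝ)) (hΩ : IsOpen Ω)
    (μ : (Fin 3 → ℝ) → Matrix (Fin 3) (Fin 3) ℝ)
    (hμ : ∀ i j : Fin 3, ContDiffOn ℝ 1 (fun y => μ y i j) Ω) :
    ∀ x ∈ Ω, divMat (fun y => Xi (μ y)) x
      = (2 : ℝ) • vecOp (skw (curlMat μ x)) := by
  intro x hx
  have hd : ∀ i j : Fin 3, DifferentiableAt ℝ (fun y => μ y i j) x := fun i j =>
    (((hμ i j).contDiffAt (hΩ.mem_nhds hx)).differentiableAt one_ne_zero)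
  have hs : DifferentiableAt ℝ (fun y => μ y 0 0 + μ y 1 1 + μ y 2 2) x :=
    ((hd 0 0).add (hd 1 1)).add (hd 2 2)
  have key : ∀ i j : Fin 3, pd j (fun y => Xi (μ y) i j) x =
      pd j (fun y => μ y j i) x -
        (pd j (fun y => μ y 0 0) x + pd j (fun y => μ y 1 1) x + pd j (fun y => μ y 2 2) x)
          * (1 : Matrix (Fin 3) (Fin 3) ℝ) i j := by
    intro i j
    have h1 : (fun y => Xi (μ y) i j)
        = fun y => μ y j i - (μ y 0 0 + μ y 1 1 + μ y 2 2) * (1 : Matrix (Fin 3) (Fin 3) ℝ) i j := by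
      funext y
      simp [Xi, Matrix.trace, Fin.sum_univ_three, Matrix.sub_apply, Matrix.smul_apply,
        Matrix.transpose_apply, smul_eq_mul, Matrix.diag]
    rw [h1]
    unfold pd
    rw [fderiv_fun_sub (hd j i) (hs.mul_const _), fderiv_mul_const hs,
      fderiv_fun_add (f := fun y => μ y 0 0 + μ y 1 1) ((hd 0 0).add (hd 1 1)) (hd 2 2), fderiv_fun_add (hd 0 0) (hd 1 1)]
    simp [mul_comm]
    ring
  funext i
  simp only [divMat, Fin.sum_univ_three, key]
  fin_cases i <;>
    simp [vecOp, skw, curlMat, curlVec, Matrix.one_apply, Pi.smul_apply, smul_eq_mul,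
      Matrix.sub_apply, Matrix.smul_apply, Matrix.transpose_apply] <;> ring
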